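/- In the unitary group U(2), let G be the subgroup generated by the matrices x = [[i, 0], [0, -i]] and y = [[0, -1], [1, 0]] together with the center S of U(2). Then the group extension S → G → G/S does not split; that is, there is no group homomorphism s : G/S → G with q ∘ s = id, where q : G → G/S is the quotient homomorphism. -/

import Mathlib

/-!
In `U(2)` the generators anticommute, `x * y = y * x * (-1)`, and `-1` is central, so the images
of `x` and `y` in `G ⧸ S` commute. A splitting `s` sends them to lifts `x * c` and `y * d` with
`c, d` central; these commute, and cancelling the central factors makes `x` and `y` commute,
which would force `-1 = 1`.
-/

open Matrix

instance center_subgroupOf_normal {M : Type*} [Group M] (G : Subgroup M) :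
    ((Subgroup.center M).subgroupOf G).Normal :=
  Subgroup.Normal.subgroupOf inferInstance G

theorem Subgroup.center_subgroupOf_le_center {M : Type*} [Group M] (H : Subgroup M) :
    (Subgroup.center M).subgroupOf H ≤ Subgroup.center H := by
  intro g hg
  rw [Subgroup.mem_subgroupOf, Subgroup.mem_center_iff] at hg
  exact Subgroup.mem_center_iff.mpr fun h => Subtype.ext (hg h)

section Splitting

variable {G : Type*} [Group G] {N : Subgroup G} [N.Normal]

theorem commute_mk_of_mul_eq_mul_mul {a b z : G} (hz : z ∈ N) (h : a * b = b * a * z) :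
    Commute (a : G ⧸ N) (b : G ⧸ N) := by
  rw [Commute, SemiconjBy, ← QuotientGroup.mk_mul, h, QuotientGroup.mk_mul,
    (QuotientGroup.eq_one_iff z).mpr hz, mul_one, QuotientGroup.mk_mul]

theorem exists_mem_and_section_mk_eq_mul {s : G ⧸ N →* G}
    (hs : (QuotientGroup.mk' N).comp s = .id _) (g : G) : ∃ c ∈ N, s g = g * c :=
  ⟨g⁻¹ * s g, QuotientGroup.eq.mp (DFunLike.congr_fun hs (g : G ⧸ N)).symm, by group⟩

theorem Commute.of_mk_of_splits_of_le_center (hN : N ≤ Subgroup.center G) {s : G ⧸ N →* G}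
    (hs : (QuotientGroup.mk' N).comp s = .id _) {a b : G}
    (hab : Commute (a : G ⧸ N) (b : G ⧸ N)) : Commute a b := by
  obtain ⟨c, hcN, hc⟩ := exists_mem_and_section_mk_eq_mul hs a
  obtain ⟨d, hdN, hd⟩ := exists_mem_and_section_mk_eq_mul hs b
  have hlifts : Commute (a * c) (b * d) := by rw [← hc, ← hd]; exact hab.map s
  have hc' : ∀ g, Commute g c⁻¹ := Subgroup.mem_center_iff.mp (hN (inv_mem hcN))
  have hd' : ∀ g, Commute g d⁻¹ := Subgroup.mem_center_iff.mp (hN (inv_mem hdN))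
  simpa using (hlifts.mul_left (hc' _).symm).mul_right (hd' _)

end Splitting

theorem Matrix.quaternion_i_mul_j_eq_neg_j_mul_i {R : Type*} [Ring R] (i : R) :
    !![i, 0; 0, -i] * !![0, -1; 1, 0] = -(!![0, -1; 1, 0] * !![i, 0; 0, -i]) := by
  ext a b; fin_cases a <;> fin_cases b <;> simp

theorem Unitary.neg_one_mem_center {A : Type*} [Ring A] [StarRing A] :
    (-1 : unitary A) ∈ Subgroup.center (unitary A) :=
  Subgroup.mem_center_iff.mpr fun g => by rw [mul_neg_one, neg_one_mul]

theorem Matrix.unitaryGroup.neg_one_ne_one {n : Type*} [Fintype n] [DecidableEq n] [Nonempty n] :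
    (-1 : unitaryGroup n ℂ) ≠ 1 := by
  intro h
  obtain ⟨i⟩ := ‹Nonempty n›
  have := congr_arg (fun u : unitaryGroup n ℂ => (u : Matrix n n ℂ) i i) h
  norm_num [Unitary.coe_neg] at this

/-- Let `G ≤ U(2)` be the subgroup generated by the unitary matrices
`x = [[i,0],[0,-i]]` and `y = [[0,-1],[1,0]]` together with the center `S` of `U(2)`.
Then the extension `S → G → G/S` does not split: there is no homomorphism
`s : G/S → G` with `q ∘ s = id`. -/
theorem quaternion_extension_does_not_split (x y : Matrix.unitaryGroup (Fin 2) ℂ)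
    (hx : (x : Matrix (Fin 2) (Fin 2) ℂ) = !![Complex.I, 0; 0, -Complex.I])
    (hy : (y : Matrix (Fin 2) (Fin 2) ℂ) = !![0, -1; 1, 0])
    (G : Subgroup (Matrix.unitaryGroup (Fin 2) ℂ))
    (hG : G = Subgroup.closure ({x, y} ∪
      (Subgroup.center (Matrix.unitaryGroup (Fin 2) ℂ) : Set (Matrix.unitaryGroup (Fin 2) ℂ)))) :
    ¬ ∃ s : (G ⧸ (Subgroup.center (Matrix.unitaryGroup (Fin 2) ℂ)).subgroupOf G) →* G,
      (QuotientGroup.mk' ((Subgroup.center (Matrix.unitaryGroup (Fin 2) ℂ)).subgroupOf G)).comp s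
        = MonoidHom.id _ := by
  rintro ⟨s, hs⟩
  have hmem : ∀ g ∈ ({x, y} ∪
      (Subgroup.center (unitaryGroup (Fin 2) ℂ) : Set (unitaryGroup (Fin 2) ℂ))), g ∈ G :=
    fun g hg => hG ▸ Subgroup.subset_closure hg
  let X : G := ⟨x, hmem x (by simp)⟩
  let Y : G := ⟨y, hmem y (by simp)⟩
  let Z : G := ⟨-1, hmem _ (Or.inr Unitary.neg_one_mem_center)⟩
  have hanti : x * y = y * x * -1 := by
    rw [mul_neg_one]; ext : 1; push_cast; rw [hx, hy, quaternion_i_mul_j_eq_neg_j_mul_i]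
  have hXY : Commute X Y :=
    Commute.of_mk_of_splits_of_le_center (Subgroup.center_subgroupOf_le_center G) hs
      (commute_mk_of_mul_eq_mul_mul (z := Z) Unitary.neg_one_mem_center (Subtype.ext hanti))
  have hyx : y * x * -1 = y * x * 1 := by
    rw [← hanti, mul_one]; exact congr_arg Subtype.val hXY
  exact unitaryGroup.neg_one_ne_one (mul_left_cancel hyx)
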